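/- Let ≤_T be either the lexicographic order with X₁ > X₂ or the graded order with X₂ > X₁. Let 2 ≤ t ≤ 4 with t ≤ ⌊r₁/2⌋ and t ≤ ⌊r₂/2⌋, let e ∈ 𝔽(r₁,r₂) with ω(e) ≤ t, let τ ∈ 𝓘, and let U be the syndrome table afforded by τ and e. Let l = (3,1) ∈ 𝔉. Let F = {f^(1), f^(2)} be a minimal set of polynomials for u^l with defining points s^(1) = (2,0) and s^(2) = (0,2), and let (g, k₁) be an auxiliary polynomial for index 1 with v₁ = g[U]_{k₁} ≠ 0. Then there exists b ∈ L such that the polynomial h_b = f^(1) − (b/v₁)·g generates u^l and satisfies h_b[U]_k = 0 for every k ∈ B(2t+1) with l ≤_T k. -/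

import Mathlib

/-!
Put `b = f⁽¹⁾[U]_{(3,1)}`. Since `LP(g) + (1,1) = k₁ <_T (3,1)`, the polynomial
`h = f⁽¹⁾ − (b/v₁)·g` still has leading exponent `(2,0)`, and `h[U]_{(2,0)+d} = 0` for every
`d ⪯ (1,1)`: for `d ≠ (1,1)` both terms vanish, and at `d = (1,1)` the choice of `b` cancels them.
The syndrome table is an exponential sum `u_n = ∑ₚ wₚ xₚ^n₁ yₚ^n₂` over the at most four error
positions, so these four equations say that `(wₚ h(xₚ, yₚ))ₚ` is orthogonal to the values of
`1, X₁, X₂, X₁X₂` at the error positions. By minimality of `F` no nonzero combination of these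
monomials vanishes at all error positions (it would generate all of `U`), so these four vectors
span and `h(xₚ, yₚ) = 0` wherever `wₚ ≠ 0`. Hence `h` generates the whole table `U`.
-/

/-- A monomial order on ℕ × ℕ: a linear order compatible with addition
for which (0,0) is the least element. -/
structure MonOrd where
  le : ℕ × ℕ → ℕ × ℕ → Prop
  refl : ∀ a, le a a
  trans : ∀ a b c, le a b → le b c → le a c
  antisymm : ∀ a b, le a b → le b a → a = b
  total : ∀ a b, le a b ∨ le b a
  add_right : ∀ a b c, le a b → le (a + c) (b + c)
  zero_le : ∀ a, le (0, 0) a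

/-- Strict version of a monomial order. -/
def MonOrd.lt (T : MonOrd) (a b : ℕ × ℕ) : Prop := T.le a b ∧ a ≠ b

/-- `s` is the leading power product exponent of `f` w.r.t. `T`. -/
def IsLP {L : Type} [Field L] (T : MonOrd) (f : (ℕ × ℕ) →₀ L) (s : ℕ × ℕ) : Prop :=
  s ∈ f.support ∧ ∀ m ∈ f.support, T.le m s

/-- `f[U]_n`, computed with respect to a given leading exponent `s` of `f`. -/
noncomputable def fApp {L : Type} [Field L] (U : ℕ × ℕ → L) (f : (ℕ × ℕ) →₀ L)
    (s n : ℕ × ℕ) : L :=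
  if s.1 ≤ n.1 ∧ s.2 ≤ n.2 then
    ∑ m ∈ f.support, f m * U (m.1 + n.1 - s.1, m.2 + n.2 - s.2)
  else 0

/-- `f` generates the doubly periodic array `U`. -/
def GeneratesU {L : Type} [Field L] (T : MonOrd) (U : ℕ × ℕ → L) (f : (ℕ × ℕ) →₀ L) : Prop :=
  ∃ s, IsLP T f s ∧ ∀ n, fApp U f s n = 0

/-- `f` generates the finite subarray `u^l` of `U`. -/
def GeneratesUpTo {L : Type} [Field L] (T : MonOrd) (U : ℕ × ℕ → L) (l : ℕ × ℕ)
    (f : (ℕ × ℕ) →₀ L) : Prop :=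
  ∃ s, IsLP T f s ∧ ∀ k, s.1 ≤ k.1 → s.2 ≤ k.2 → T.lt k l → fApp U f s k = 0

/-- `U` is a doubly periodic array of period r₁ × r₂. -/
def DoublyPeriodic {L : Type} (r₁ r₂ : ℕ) (U : ℕ × ℕ → L) : Prop :=
  ∀ n m : ℕ × ℕ, n.1 % r₁ = m.1 % r₁ → n.2 % r₂ = m.2 % r₂ → U n = U m

/-- Evaluation of a bivariate polynomial at a point `(x, y)`. -/
noncomputable def polyEval {L : Type} [Field L] (f : (ℕ × ℕ) →₀ L) (x y : L) : L :=
  ∑ m ∈ f.support, f m * x ^ m.1 * y ^ m.2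

/-- The syndrome table afforded by `τ` and `e`:  `u_n = e(α^(τ+n))`. -/
noncomputable def synTable {F L : Type} [Field F] [Field L] [Algebra F L] {r₁ r₂ : ℕ}
    (α₁ α₂ : L) (τ : Fin r₁ × Fin r₂) (e : Fin r₁ × Fin r₂ → F) : ℕ × ℕ → L :=
  fun n => ∑ p : Fin r₁ × Fin r₂,
    algebraMap F L (e p) * (α₁ ^ ((τ.1 : ℕ) + n.1)) ^ (p.1 : ℕ)
      * (α₂ ^ ((τ.2 : ℕ) + n.2)) ^ (p.2 : ℕ)

/-- The weight ω(e): number of nonzero coefficients. -/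
noncomputable def wt {F : Type} [Field F] {r₁ r₂ : ℕ} (e : Fin r₁ × Fin r₂ → F) : ℕ :=
  {p | e p ≠ 0}.ncard

/-- The hyperbolic set B(δ) of amplitude δ inside {0,…,r₁−1} × {0,…,r₂−1}. -/
def hypB (r₁ r₂ δ : ℕ) : Set (ℕ × ℕ) :=
  {l | l.1 < r₁ ∧ l.2 < r₂ ∧ (l.1 + 1) * (l.2 + 1) ≤ δ ∧ l ≠ (δ - 1, 0) ∧ l ≠ (0, δ - 1)}

/-- The border set 𝔉 = {l ∈ B(2t+1) : 2t ≤ (l₁+1)(l₂+1)}. -/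
def frontF (r₁ r₂ t : ℕ) : Set (ℕ × ℕ) :=
  {l ∈ hypB r₁ r₂ (2 * t + 1) | 2 * t ≤ (l.1 + 1) * (l.2 + 1)}

/-- The lexicographic order with X₁ > X₂. -/
def lexMonOrd : MonOrd where
  le a b := a.1 < b.1 ∨ (a.1 = b.1 ∧ a.2 ≤ b.2)
  refl a := by omega
  trans a b c h1 h2 := by omega
  antisymm a b h1 h2 := by
    obtain ⟨a1, a2⟩ := a; obtain ⟨b1, b2⟩ := b
    simp_all only [Prod.mk.injEq]; omega
  total a b := by omega
  add_right a b c h := by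
    obtain ⟨a1, a2⟩ := a; obtain ⟨b1, b2⟩ := b; obtain ⟨c1, c2⟩ := c
    simp_all only [Prod.mk_add_mk]; omega
  zero_le a := by
    obtain ⟨a1, a2⟩ := a; simp only []; omega

/-- The (reverse) graded order with X₂ > X₁. -/
def grMonOrd : MonOrd where
  le a b := a.1 + a.2 < b.1 + b.2 ∨ (a.1 + a.2 = b.1 + b.2 ∧ a.2 ≤ b.2)
  refl a := by omega
  trans a b c h1 h2 := by omega
  antisymm a b h1 h2 := by
    obtain ⟨a1, a2⟩ := a; obtain ⟨b1, b2⟩ := b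
    simp_all only [Prod.mk.injEq]; omega
  total a b := by omega
  add_right a b c h := by
    obtain ⟨a1, a2⟩ := a; obtain ⟨b1, b2⟩ := b; obtain ⟨c1, c2⟩ := c
    simp_all only [Prod.mk_add_mk]; omega
  zero_le a := by
    obtain ⟨a1, a2⟩ := a; simp only []; omega

/-- The ideal (X₁^{r₁} − 1, X₂^{r₂} − 1) of L[X₁,X₂]. -/
noncomputable def periodIdeal (L : Type) [Field L] (r₁ r₂ : ℕ) :
    Ideal (AddMonoidAlgebra L (ℕ × ℕ)) :=
  Ideal.span {AddMonoidAlgebra.single (r₁, 0) 1 - 1, AddMonoidAlgebra.single (0, r₂) 1 - 1}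

namespace MonOrd

variable (T : MonOrd) {a b c : ℕ × ℕ}

theorem le_of_add_le_add_right (h : T.le (a + c) (b + c)) : T.le a b := by
  refine (T.total a b).elim id fun hba => ?_
  have hab : a + c = b + c := T.antisymm _ _ h (T.add_right _ _ c hba)
  exact add_right_cancel hab ▸ T.refl a

theorem lt_of_add_lt_add_right (h : T.lt (a + c) (b + c)) : T.lt a b :=
  ⟨T.le_of_add_le_add_right h.1, fun hab => h.2 (by rw [hab])⟩

theorem add_lt_add_left (h : T.lt a b) (c : ℕ × ℕ) : T.lt (c + a) (c + b) := by
  rw [add_comm c a, add_comm c b]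
  exact ⟨T.add_right _ _ c h.1, fun hab => h.2 (add_right_cancel hab)⟩

theorem le_of_componentwise_le (h : a ≤ b) : T.le a b := by
  have := T.add_right _ _ a (T.zero_le (b - a))
  rwa [Prod.mk_zero_zero, zero_add, tsub_add_cancel_of_le h] at this

theorem exists_isLP {L : Type} [Field L] {f : (ℕ × ℕ) →₀ L} (hf : f ≠ 0) : ∃ s, IsLP T f s := by
  classical
  suffices ∀ A : Finset (ℕ × ℕ), A.Nonempty → ∃ s ∈ A, ∀ m ∈ A, T.le m s from
    this f.support (Finsupp.support_nonempty_iff.mpr hf)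
  intro A hA
  induction hA using Finset.Nonempty.cons_induction with
  | singleton a => exact ⟨a, by simp, fun m hm => Finset.mem_singleton.mp hm ▸ T.refl a⟩
  | cons a A ha _ ih =>
    obtain ⟨s, hs, hmax⟩ := ih
    rcases T.total a s with has | hsa
    · exact ⟨s, Finset.mem_cons_of_mem hs, fun m hm =>
        (Finset.mem_cons.mp hm).elim (· ▸ has) (hmax m)⟩
    · exact ⟨a, Finset.mem_cons_self a A, fun m hm =>
        (Finset.mem_cons.mp hm).elim (· ▸ T.refl a) fun hm => T.trans _ _ _ (hmax m hm) hsa⟩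

end MonOrd

theorem IsLP.sub_smul {L : Type} [Field L] {T : MonOrd} {f g : (ℕ × ℕ) →₀ L} {s sg : ℕ × ℕ}
    (hf : IsLP T f s) (hg : IsLP T g sg) (hlt : T.lt sg s) (c : L) :
    IsLP T (f - c • g) s := by
  classical
  have hgs : g s = 0 := by
    by_contra hne
    exact hlt.2 (T.antisymm _ _ hlt.1 (hg.2 s (Finsupp.mem_support_iff.mpr hne)))
  refine ⟨?_, fun m hm => ?_⟩
  · simpa [hgs] using hf.1
  · rcases Finset.mem_union.mp (Finsupp.support_sub hm) with hm | hm
    · exact hf.2 m hm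
    · exact T.trans _ _ _ (hg.2 m (Finsupp.support_smul hm)) hlt.1

section fApp

variable {L : Type} [Field L]

theorem fApp_add (U : ℕ × ℕ → L) (f : (ℕ × ℕ) →₀ L) (s d : ℕ × ℕ) :
    fApp U f s (s + d) = f.sum fun m a => a * U (m + d) := by
  rw [fApp, if_pos ⟨Nat.le_add_right _ _, Nat.le_add_right _ _⟩]
  refine Finset.sum_congr rfl fun m _ => ?_
  congr 2
  ext <;> simp only [Prod.fst_add, Prod.snd_add] <;> omega

theorem fApp_sub_smul (U : ℕ × ℕ → L) (f g : (ℕ × ℕ) →₀ L) (c : L) (s sg d : ℕ × ℕ) :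
    fApp U (f - c • g) s (s + d) = fApp U f s (s + d) - c * fApp U g sg (sg + d) := by
  rw [fApp_add, fApp_add, fApp_add, Finsupp.sum_sub_index (fun _ _ _ => sub_mul _ _ _),
    Finsupp.sum_smul_index (fun _ => zero_mul _), Finsupp.mul_sum]
  simp only [mul_assoc]

theorem fApp_sub_div_smul_eq_zero {T : MonOrd} {U : ℕ × ℕ → L} {f g : (ℕ × ℕ) →₀ L}
    {s sg D : ℕ × ℕ}
    (hf : ∀ k : ℕ × ℕ, s.1 ≤ k.1 → s.2 ≤ k.2 → T.lt k (s + D) → fApp U f s k = 0)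
    (hg : ∀ m : ℕ × ℕ, sg.1 ≤ m.1 → sg.2 ≤ m.2 → T.lt m (sg + D) → fApp U g sg m = 0)
    (hv : fApp U g sg (sg + D) ≠ 0) {d : ℕ × ℕ} (hd : T.le d D) :
    fApp U (f - (fApp U f s (s + D) / fApp U g sg (sg + D)) • g) s (s + d) = 0 := by
  rw [fApp_sub_smul U f g _ s sg d]
  rcases eq_or_ne d D with rfl | hne
  · rw [div_mul_cancel₀ _ hv, sub_self]
  · have hlt : T.lt d D := ⟨hd, hne⟩
    rw [hf _ (Nat.le_add_right _ _) (Nat.le_add_right _ _) (T.add_lt_add_left hlt s),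
      hg _ (Nat.le_add_right _ _) (Nat.le_add_right _ _) (T.add_lt_add_left hlt sg),
      mul_zero, sub_zero]

end fApp

theorem LinearIndependent.eq_zero_of_forall_dotProduct_eq_zero {K κ n : Type*} [Field K]
    [Fintype κ] [Fintype n] [DecidableEq n] {v : κ → n → K} (hv : LinearIndependent K v)
    (hcard : Fintype.card n ≤ Fintype.card κ) {c : n → K} (hc : ∀ k, c ⬝ᵥ v k = 0) : c = 0 := by
  have hle := hv.fintype_card_le_finrank
  rw [Module.finrank_fintype_fun_eq_card] at hle
  have hspan := hv.span_eq_top_of_card_eq_finrank'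
    (by rw [Module.finrank_fintype_fun_eq_card]; omega)
  have hdual : dotProductEquiv K n c = 0 := LinearMap.ext_on_range hspan (by simpa using hc)
  exact dotProduct_eq_zero c fun u => by simpa using LinearMap.congr_fun hdual u

section Monomials

variable {ι L : Type} [Field L] (x y : ι → L)

def monomialEval (m : ℕ × ℕ) : ι → L := fun i => x i ^ m.1 * y i ^ m.2

theorem linearCombination_monomialEval (P : (ℕ × ℕ) →₀ L) :
    Finsupp.linearCombination L (monomialEval x y) P = fun i => polyEval P (x i) (y i) := by
  funext i
  simp [Finsupp.linearCombination_apply, Finsupp.sum, polyEval, monomialEval, mul_assoc]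

theorem linearIndepOn_monomialEval {B : Set (ℕ × ℕ)}
    (hsep : ∀ P ∈ Finsupp.supported L L B, (∀ i, polyEval P (x i) (y i) = 0) → P = 0) :
    LinearIndepOn L (monomialEval x y) B :=
  linearIndepOn_iff.mpr fun P hP h0 => hsep P hP fun i => by
    simpa [linearCombination_monomialEval] using congr_fun h0 i

end Monomials

noncomputable def expSum {ι L : Type} [Fintype ι] [Field L] (w x y : ι → L) : ℕ × ℕ → L :=
  fun n => ∑ i, w i * x i ^ n.1 * y i ^ n.2

theorem synTable_eq_expSum {F L : Type} [Field F] [Field L] [Algebra F L] {r₁ r₂ : ℕ}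
    (α₁ α₂ : L) (τ : Fin r₁ × Fin r₂) (e : Fin r₁ × Fin r₂ → F) :
    synTable α₁ α₂ τ e =
      expSum (fun p => algebraMap F L (e p) * (α₁ ^ (p.1 : ℕ)) ^ (τ.1 : ℕ)
          * (α₂ ^ (p.2 : ℕ)) ^ (τ.2 : ℕ))
        (fun p => α₁ ^ (p.1 : ℕ)) (fun p => α₂ ^ (p.2 : ℕ)) := by
  funext n
  refine Finset.sum_congr rfl fun p _ => ?_
  simp only [← pow_mul, pow_add]
  ring

section expSum

variable {ι L : Type} [Fintype ι] [Field L] {w x y : ι → L} {S : Finset ι}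

theorem fApp_expSum_add (f : (ℕ × ℕ) →₀ L) (s d : ℕ × ℕ) :
    fApp (expSum w x y) f s (s + d) =
      ∑ i, w i * x i ^ d.1 * y i ^ d.2 * polyEval f (x i) (y i) := by
  simp only [fApp_add, expSum, polyEval, Finsupp.sum, Finset.mul_sum]
  rw [Finset.sum_comm]
  refine Finset.sum_congr rfl fun i _ => Finset.sum_congr rfl fun m _ => ?_
  simp only [Prod.fst_add, Prod.snd_add, pow_add]
  ring

theorem fApp_expSum_eq_zero {f : (ℕ × ℕ) →₀ L}
    (hf : ∀ i, w i * polyEval f (x i) (y i) = 0) (s n : ℕ × ℕ) :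
    fApp (expSum w x y) f s n = 0 := by
  by_cases hsn : s ≤ n
  · rw [← add_tsub_cancel_of_le hsn, fApp_expSum_add]
    refine Finset.sum_eq_zero fun i _ => ?_
    rw [mul_right_comm, mul_right_comm (w i), hf, zero_mul, zero_mul]
  · exact if_neg hsn

/-- The moments say that `(wᵢ f(xᵢ, yᵢ))_{i ∈ S}` is orthogonal to the values of the monomials
`X^m`, `m ∈ B`, on `S`; these are independent and at least `#S` in number, so they span `L^S`. -/
theorem fApp_expSum_eq_zero_of_moments (hw : ∀ i ∉ S, w i = 0) {B : Finset (ℕ × ℕ)}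
    (hcard : S.card ≤ B.card)
    (hsep : ∀ P ∈ Finsupp.supported L L (B : Set (ℕ × ℕ)),
      (∀ i ∈ S, polyEval P (x i) (y i) = 0) → P = 0)
    {f : (ℕ × ℕ) →₀ L} {s : ℕ × ℕ} (hmom : ∀ m ∈ B, fApp (expSum w x y) f s (s + m) = 0)
    (n : ℕ × ℕ) : fApp (expSum w x y) f s n = 0 := by
  classical
  have hind : LinearIndepOn L (monomialEval (fun i : S => x i) (fun i : S => y i)) B :=
    linearIndepOn_monomialEval _ _ fun P hP h => hsep P hP fun i hi => h ⟨i, hi⟩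
  have hc : (fun i : S => w i * polyEval f (x i) (y i)) = 0 := by
    refine hind.eq_zero_of_forall_dotProduct_eq_zero (by simpa using hcard) fun m => ?_
    rw [← hmom m m.2, fApp_expSum_add, ← Finset.sum_subset S.subset_univ
      fun i _ hi => by rw [hw i hi, zero_mul, zero_mul, zero_mul], ← Finset.sum_coe_sort S]
    refine Finset.sum_congr rfl fun i _ => ?_
    simp only [monomialEval]
    ring
  refine fApp_expSum_eq_zero (fun i => ?_) s n
  by_cases hi : i ∈ S
  · exact congr_fun hc ⟨i, hi⟩
  · rw [hw i hi, zero_mul]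

theorem eq_zero_of_supported_of_polyEval_eq_zero (hw : ∀ i ∉ S, w i = 0) {T : MonOrd}
    {B : Set (ℕ × ℕ)} (hmin : ∀ P sp, IsLP T P sp → sp ∈ B → ∃ k, fApp (expSum w x y) P sp k ≠ 0)
    {P : (ℕ × ℕ) →₀ L} (hP : P ∈ Finsupp.supported L L B)
    (hvan : ∀ i ∈ S, polyEval P (x i) (y i) = 0) : P = 0 := by
  by_contra hP0
  obtain ⟨sp, hsp⟩ := T.exists_isLP hP0
  obtain ⟨k, hk⟩ := hmin P sp hsp (hP hsp.1)
  refine hk (fApp_expSum_eq_zero (fun i => ?_) sp k)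
  by_cases hi : i ∈ S
  · rw [hvan i hi, mul_zero]
  · rw [hw i hi, zero_mul]

end expSum

theorem exceptional_case_three_one_general
    (F : Type) [Field F]
    (L : Type) [Field L] [Algebra F L]
    (r₁ r₂ : ℕ)
    (α₁ α₂ : L)
    (T : MonOrd)
    (t : ℕ) (ht4 : t ≤ 4)
    (e : Fin r₁ × Fin r₂ → F) (hω : wt e ≤ t) (τ : Fin r₁ × Fin r₂)
    (U : ℕ × ℕ → L) (hU : U = synTable α₁ α₂ τ e)
    (l : ℕ × ℕ) (hleq : l = (3, 1))
    (f₁ : (ℕ × ℕ) →₀ L) (s₁ s₂ : ℕ × ℕ)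
    (hLP1 : IsLP T f₁ s₁)
    (hs1 : s₁ = (2, 0)) (hs2 : s₂ = (0, 2))
    (hgen1 : ∀ k : ℕ × ℕ, s₁.1 ≤ k.1 → s₁.2 ≤ k.2 → T.lt k l → fApp U f₁ s₁ k = 0)
    (hmin : ∀ (g : (ℕ × ℕ) →₀ L) (sg : ℕ × ℕ), IsLP T g sg →
      sg.1 ≤ s₁.1 - 1 → sg.2 ≤ s₂.2 - 1 →
      ∃ k : ℕ × ℕ, sg.1 ≤ k.1 ∧ sg.2 ≤ k.2 ∧ T.lt k l ∧ fApp U g sg k ≠ 0)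
    (g : (ℕ × ℕ) →₀ L) (sg k₁ : ℕ × ℕ) (hgLP : IsLP T g sg)
    (hk₁l : T.lt k₁ l)
    (hgpast : ∀ m : ℕ × ℕ, sg.1 ≤ m.1 → sg.2 ≤ m.2 → T.lt m k₁ → fApp U g sg m = 0)
    (hk₁LP : (k₁.1 - sg.1, k₁.2 - sg.2) = (s₁.1 - 1, s₂.2 - 1))
    (v₁ : L) (hv₁ : fApp U g sg k₁ = v₁) (hv₁0 : v₁ ≠ 0) :
    ∃ b : L, ∃ sh : ℕ × ℕ,
      IsLP T (f₁ - (b / v₁) • g) sh ∧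
      (∀ k : ℕ × ℕ, sh.1 ≤ k.1 → sh.2 ≤ k.2 → T.lt k l →
        fApp U (f₁ - (b / v₁) • g) sh k = 0) ∧
      (∀ k ∈ hypB r₁ r₂ (2 * t + 1), T.le l k →
        fApp U (f₁ - (b / v₁) • g) sh k = 0) := by
  classical
  subst hleq hs1 hs2 hv₁
  obtain rfl : k₁ = sg + (1, 1) := by
    simp only [Prod.mk.injEq] at hk₁LP
    ext <;> simp only [Prod.fst_add, Prod.snd_add] <;> omega
  set B : Finset (ℕ × ℕ) := Finset.range 2 ×ˢ Finset.range 2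
  set S := Finset.univ.filter fun p => e p ≠ 0
  obtain ⟨w, x, y, rfl, hw⟩ : ∃ w x y, U = expSum w x y ∧ ∀ p ∉ S, w p = 0 :=
    ⟨_, _, _, hU.trans (synTable_eq_expSum α₁ α₂ τ e), fun p hp => by simp_all [S]⟩
  have hcard : S.card ≤ B.card := by
    have hS : {p | e p ≠ 0} = (S : Set (Fin r₁ × Fin r₂)) := by ext; simp [S]
    rw [wt, hS, Set.ncard_coe_finset] at hω
    simp only [B, Finset.card_product, Finset.card_range]
    omega
  have hsep (P) (hP : P ∈ Finsupp.supported L L (B : Set (ℕ × ℕ))) :=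
    eq_zero_of_supported_of_polyEval_eq_zero hw (fun P sp hsp hspB => by
      simp only [B, Finset.coe_product, Finset.coe_range, Set.mem_prod, Set.mem_Iio] at hspB
      obtain ⟨k, -, -, -, hk⟩ := hmin P sp hsp (by omega) (by omega)
      exact ⟨k, hk⟩) hP
  have hzero := fApp_expSum_eq_zero_of_moments hw hcard hsep fun d hd =>
    fApp_sub_div_smul_eq_zero hgen1 hgpast hv₁0 <| T.le_of_componentwise_le <| by
      simp only [B, Finset.mem_product, Finset.mem_range] at hd
      exact ⟨by omega, by omega⟩
  exact ⟨_, (2, 0), hLP1.sub_smul hgLP (T.lt_of_add_lt_add_right hk₁l) _,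
    fun k _ _ _ => hzero k, fun k _ _ => hzero k⟩

/-- either order; exceptional case d = 2, s⁽¹⁾ = (2,0), s⁽²⁾ = (0,2),
l = (3,1): existence of b ∈ L such that h_b = f⁽¹⁾ − (b/v₁)·g generates u^l and
kills all later points of B(2t+1). -/
theorem exceptional_case_three_one
    (q : ℕ) (hq : IsPrimePow q)
    (F : Type) [Field F] [Fintype F] (hF : Fintype.card F = q)
    (L : Type) [Field L] [Algebra F L]
    (r₁ r₂ : ℕ) (hr₁ : 0 < r₁) (hr₂ : 0 < r₂) (hco : Nat.Coprime q (r₁ * r₂))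
    (α₁ α₂ : L) (hα₁ : IsPrimitiveRoot α₁ r₁) (hα₂ : IsPrimitiveRoot α₂ r₂)
    (T : MonOrd) (hT : T = lexMonOrd ∨ T = grMonOrd)
    (t : ℕ) (ht2 : 2 ≤ t) (ht4 : t ≤ 4) (htr1 : t ≤ r₁ / 2) (htr2 : t ≤ r₂ / 2)
    (e : Fin r₁ × Fin r₂ → F) (hω : wt e ≤ t) (τ : Fin r₁ × Fin r₂)
    (U : ℕ × ℕ → L) (hU : U = synTable α₁ α₂ τ e)
    (l : ℕ × ℕ) (hl : l ∈ frontF r₁ r₂ t) (hleq : l = (3, 1))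
    (f₁ f₂ : (ℕ × ℕ) →₀ L) (s₁ s₂ : ℕ × ℕ)
    (hLP1 : IsLP T f₁ s₁) (hLP2 : IsLP T f₂ s₂)
    (hstair1 : s₂.1 = 0) (hstair2 : s₁.2 = 0)
    (hstair3 : s₂.1 < s₁.1) (hstair4 : s₁.2 < s₂.2)
    (hs1 : s₁ = (2, 0)) (hs2 : s₂ = (0, 2))
    (hgen1 : ∀ k : ℕ × ℕ, s₁.1 ≤ k.1 → s₁.2 ≤ k.2 → T.lt k l → fApp U f₁ s₁ k = 0)
    (hgen2 : ∀ k : ℕ × ℕ, s₂.1 ≤ k.1 → s₂.2 ≤ k.2 → T.lt k l → fApp U f₂ s₂ k = 0)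
    (hmin : ∀ (g : (ℕ × ℕ) →₀ L) (sg : ℕ × ℕ), IsLP T g sg →
      sg.1 ≤ s₁.1 - 1 → sg.2 ≤ s₂.2 - 1 →
      ∃ k : ℕ × ℕ, sg.1 ≤ k.1 ∧ sg.2 ≤ k.2 ∧ T.lt k l ∧ fApp U g sg k ≠ 0)
    (g : (ℕ × ℕ) →₀ L) (sg k₁ : ℕ × ℕ) (hgLP : IsLP T g sg)
    (hk₁l : T.lt k₁ l)
    (hgpast : ∀ m : ℕ × ℕ, sg.1 ≤ m.1 → sg.2 ≤ m.2 → T.lt m k₁ → fApp U g sg m = 0)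
    (hk₁LP : (k₁.1 - sg.1, k₁.2 - sg.2) = (s₁.1 - 1, s₂.2 - 1))
    (v₁ : L) (hv₁ : fApp U g sg k₁ = v₁) (hv₁0 : v₁ ≠ 0) :
    ∃ b : L, ∃ sh : ℕ × ℕ,
      IsLP T (f₁ - (b / v₁) • g) sh ∧
      (∀ k : ℕ × ℕ, sh.1 ≤ k.1 → sh.2 ≤ k.2 → T.lt k l →
        fApp U (f₁ - (b / v₁) • g) sh k = 0) ∧
      (∀ k ∈ hypB r₁ r₂ (2 * t + 1), T.le l k →
        fApp U (f₁ - (b / v₁) • g) sh k = 0) :=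
  exceptional_case_three_one_general F L r₁ r₂ α₁ α₂ T t ht4 e hω τ U hU l hleq f₁ s₁ s₂ hLP1 hs1
    hs2 hgen1 hmin g sg k₁ hgLP hk₁l hgpast hk₁LP v₁ hv₁ hv₁0
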